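/- Let, for each ε > 0, φ_ε := η_{ε/2} * ψ_ε be the convolution of the rescaled standard mollifier η_{ε/2} with ψ_ε(t) := max(min(t, 1+ε), −ε). Then: (i) |φ_ε(t)| ≤ 1+ε for all t ∈ ℝ and ε > 0, and for each t ∈ ℝ, φ_ε(t) → min(max(t,0), 1) as ε → 0+; (ii) |φ_ε'(t)| ≤ 1 for all t ∈ ℝ and ε > 0, and for each t ∈ ℝ, φ_ε'(t) → 1_{[0,1]}(t) as ε → 0+, where 1_{[0,1]} is the indicator function of the interval [0,1]. -/

import Mathlib

/-!
For `ε > 0` the kernel `η_{ε/2}` is an even probability density supported in `[-ε/2, ε/2]`,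
and `ψ_ε` is `1`-Lipschitz and bounded by `1 + ε`. Convolution preserves both properties,
which gives the uniform bounds (`|φ_ε'| ≤ 1` from the Lipschitz constant). Since the kernel
is even, its first moment vanishes, so convolution reproduces any function that is affine on
`[t - ε/2, t + ε/2]`. Hence `φ_ε(t) = -ε` for `t ≤ -3ε/2`, `φ_ε(t) = t` on `[-ε/2, 1 + ε/2]`
and `φ_ε(t) = 1 + ε` for `t ≥ 1 + 3ε/2`. A fixed `t` eventually avoids the two transition
layers of width `ε` as `ε → 0+`, so `φ_ε(t)` eventually equals `ψ_ε(t) → min (max t 0) 1`,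
and `φ_ε'(t)` eventually equals `1_{[0,1]}(t)`.
-/

open Filter Set
open scoped Topology

noncomputable section

def stdBump (t : ℝ) : ℝ := if |t| < 1 then Real.exp (1 / (t ^ 2 - 1)) else 0

/-- The standard mollifier `η` on `ℝ`, normalized so that `∫ η = 1`. -/
def stdMollifier (t : ℝ) : ℝ := (∫ s, stdBump s)⁻¹ * stdBump t

/-- The rescaled mollifier `η_δ(t) = δ⁻¹ η(t/δ)`. -/
def mollifierScaled (δ t : ℝ) : ℝ := (1 / δ) * stdMollifier (t / δ)

/-- The truncation `ψ_ε(t) = (t ∧ (1+ε)) ∨ (−ε)`. -/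
def truncFn (ε t : ℝ) : ℝ := max (min t (1 + ε)) (-ε)

/-- `φ_ε = η_{ε/2} * ψ_ε` (convolution). -/
def phiEps (ε t : ℝ) : ℝ := ∫ s, mollifierScaled (ε / 2) s * truncFn ε (t - s)

open MeasureTheory

structure IsMollifier (k : ℝ → ℝ) (δ : ℝ) : Prop where
  continuous : Continuous k
  nonneg : ∀ s, 0 ≤ k s
  eq_zero_of_le_abs : ∀ s, δ ≤ |s| → k s = 0
  integral_eq_one : ∫ s, k s = 1

lemma hasCompactSupport_of_eq_zero_of_le_abs {f : ℝ → ℝ} {δ : ℝ}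
    (hf : ∀ s, δ ≤ |s| → f s = 0) : HasCompactSupport f :=
  HasCompactSupport.intro (isCompact_Icc (a := -δ) (b := δ)) fun s hs =>
    hf s (le_of_lt (not_le.1 fun h => hs (mem_Icc.2 (abs_le.1 h))))

lemma integral_id_mul_eq_zero_of_even {k : ℝ → ℝ} (heven : ∀ s, k (-s) = k s) :
    ∫ s, s * k s = 0 := by
  -- `∫ f = ∫ f ∘ neg` holds for every `f`, so no integrability assumption is needed.
  have h := integral_neg_eq_self (fun s => s * k s) volume
  simp only [heven, neg_mul, integral_neg] at h
  linarith

namespace IsMollifier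

variable {k g : ℝ → ℝ} {δ : ℝ}

lemma hasCompactSupport (hk : IsMollifier k δ) : HasCompactSupport k :=
  hasCompactSupport_of_eq_zero_of_le_abs hk.eq_zero_of_le_abs

lemma integrable (hk : IsMollifier k δ) : Integrable k :=
  hk.continuous.integrable_of_hasCompactSupport hk.hasCompactSupport

lemma integrable_mul_comp_sub (hk : IsMollifier k δ) (hg : Continuous g) (t : ℝ) :
    Integrable fun s => k s * g (t - s) :=
  (hk.continuous.mul (hg.comp (continuous_sub_left t))).integrable_of_hasCompactSupport
    hk.hasCompactSupport.mul_right

lemma integral_const_mul_eq (hk : IsMollifier k δ) (c : ℝ) : ∫ s, c * k s = c := by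
  rw [integral_const_mul, hk.integral_eq_one, mul_one]

lemma abs_integral_mul_comp_sub_le (hk : IsMollifier k δ) {M : ℝ} (hM : ∀ u, |g u| ≤ M)
    (t : ℝ) : |∫ s, k s * g (t - s)| ≤ M := by
  refine (norm_integral_le_of_norm_le (f := fun s => k s * g (t - s))
    (hk.integrable.const_mul M) (ae_of_all _ fun s => ?_)).trans_eq (hk.integral_const_mul_eq M)
  rw [Real.norm_eq_abs, abs_mul, abs_of_nonneg (hk.nonneg s), mul_comm]
  exact mul_le_mul_of_nonneg_right (hM _) (hk.nonneg s)

lemma lipschitzWith_integral_mul_comp_sub (hk : IsMollifier k δ) {K : NNReal}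
    (hg : LipschitzWith K g) : LipschitzWith K fun t => ∫ s, k s * g (t - s) := by
  refine LipschitzWith.of_dist_le_mul fun x y => ?_
  rw [Real.dist_eq, ← integral_sub (hk.integrable_mul_comp_sub hg.continuous x)
    (hk.integrable_mul_comp_sub hg.continuous y)]
  refine (norm_integral_le_of_norm_le (f := fun s => k s * g (x - s) - k s * g (y - s))
    (hk.integrable.const_mul (K * dist x y)) (ae_of_all _ fun s => ?_)).trans_eq
    (hk.integral_const_mul_eq _)
  rw [← mul_sub, Real.norm_eq_abs, abs_mul, abs_of_nonneg (hk.nonneg s), mul_comm]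
  refine mul_le_mul_of_nonneg_right ?_ (hk.nonneg s)
  simpa [Real.dist_eq] using hg.dist_le_mul (x - s) (y - s)

lemma integral_mul_comp_sub_of_affine (hk : IsMollifier k δ) (heven : ∀ s, k (-s) = k s)
    {t a b : ℝ} (hg : ∀ u, |u - t| ≤ δ → g u = a * u + b) :
    ∫ s, k s * g (t - s) = a * t + b := by
  have hintegrand : (fun s => k s * g (t - s)) = fun s => (a * t + b) * k s - a * (s * k s) := by
    funext s
    rcases le_or_gt δ |s| with hs | hs
    · rw [hk.eq_zero_of_le_abs s hs]; ring
    · rw [hg (t - s) (by rw [sub_sub_cancel_left, abs_neg]; exact hs.le)]; ring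
  have hid : Integrable fun s => s * k s :=
    (continuous_id.mul hk.continuous).integrable_of_hasCompactSupport hk.hasCompactSupport.mul_left
  rw [hintegrand, integral_sub (hk.integrable.const_mul _) (hid.const_mul a),
    hk.integral_const_mul_eq, integral_const_mul, integral_id_mul_eq_zero_of_even heven, mul_zero,
    sub_zero]

lemma rescale (hk : IsMollifier k δ) {c : ℝ} (hc : 0 < c) :
    IsMollifier (fun t => (1 / c) * k (t / c)) (c * δ) where
  continuous := continuous_const.mul (hk.continuous.comp (continuous_id.div_const c))
  nonneg s := mul_nonneg (by positivity) (hk.nonneg _)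
  eq_zero_of_le_abs s hs := by
    rw [hk.eq_zero_of_le_abs, mul_zero]
    rwa [abs_div, abs_of_pos hc, le_div_iff₀ hc, mul_comm]
  integral_eq_one := by
    rw [integral_const_mul, Measure.integral_comp_div k c, hk.integral_eq_one, abs_of_pos hc,
      smul_eq_mul, mul_one, one_div, inv_mul_cancel₀ hc.ne']

end IsMollifier

lemma stdBump_eq_expNegInvGlue (t : ℝ) : stdBump t = expNegInvGlue (1 - t ^ 2) := by
  unfold stdBump expNegInvGlue
  rcases lt_or_ge |t| 1 with h | h
  · have h2 : 0 < 1 - t ^ 2 := by nlinarith [abs_lt.1 h]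
    rw [if_pos h, if_neg (not_le.2 h2), one_div, neg_inv, neg_sub]
  · have h2 : 1 - t ^ 2 ≤ 0 := by nlinarith [sq_abs t]
    rw [if_neg (not_lt.2 h), if_pos h2]

lemma stdBump_neg (t : ℝ) : stdBump (-t) = stdBump t := by
  simp [stdBump]

lemma stdBump_nonneg (t : ℝ) : 0 ≤ stdBump t := by
  rw [stdBump_eq_expNegInvGlue]; exact expNegInvGlue.nonneg _

lemma stdBump_eq_zero_of_le_abs {t : ℝ} (h : 1 ≤ |t|) : stdBump t = 0 := by
  simp [stdBump, not_lt.2 h]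

lemma continuous_stdBump : Continuous stdBump := by
  simp only [funext stdBump_eq_expNegInvGlue]
  exact (expNegInvGlue.contDiff (n := 0)).continuous.comp (by fun_prop)

lemma integral_stdBump_pos : 0 < ∫ s, stdBump s :=
  continuous_stdBump.integral_pos_of_hasCompactSupport_nonneg_nonzero
    (hasCompactSupport_of_eq_zero_of_le_abs fun _ => stdBump_eq_zero_of_le_abs)
    stdBump_nonneg
    (x := 0) (by simp [stdBump, (Real.exp_pos _).ne'])

lemma isMollifier_stdMollifier : IsMollifier stdMollifier 1 where
  continuous := continuous_const.mul continuous_stdBump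
  nonneg t := mul_nonneg (inv_nonneg.2 integral_stdBump_pos.le) (stdBump_nonneg t)
  eq_zero_of_le_abs t ht := by rw [stdMollifier, stdBump_eq_zero_of_le_abs ht, mul_zero]
  integral_eq_one := by
    simp only [stdMollifier]
    rw [integral_const_mul, inv_mul_cancel₀ integral_stdBump_pos.ne']

lemma isMollifier_mollifierScaled {δ : ℝ} (hδ : 0 < δ) :
    IsMollifier (mollifierScaled δ) δ := by
  have h := isMollifier_stdMollifier.rescale hδ
  rwa [mul_one] at h

lemma mollifierScaled_neg (δ t : ℝ) : mollifierScaled δ (-t) = mollifierScaled δ t := by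
  simp [mollifierScaled, stdMollifier, neg_div, stdBump_neg]

section Truncation

variable {ε u : ℝ}

lemma abs_truncFn_le (hε : 0 ≤ ε) (u : ℝ) : |truncFn ε u| ≤ 1 + ε :=
  abs_le.2 ⟨(by linarith : -(1 + ε) ≤ -ε).trans (le_max_right _ _),
    max_le (min_le_right _ _) (by linarith)⟩

lemma lipschitzWith_truncFn (ε : ℝ) : LipschitzWith 1 (truncFn ε) :=
  (LipschitzWith.id.min_const _).max_const _

lemma truncFn_of_le (h : u ≤ -ε) : truncFn ε u = -ε :=
  max_eq_right ((min_le_left _ _).trans h)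

lemma truncFn_of_mem_Icc (h₁ : -ε ≤ u) (h₂ : u ≤ 1 + ε) : truncFn ε u = u := by
  rw [truncFn, min_eq_left h₂, max_eq_left h₁]

lemma truncFn_of_ge (hε : 0 ≤ ε) (h : 1 + ε ≤ u) : truncFn ε u = 1 + ε := by
  rw [truncFn, min_eq_right h, max_eq_left (by linarith)]

lemma truncFn_zero (u : ℝ) : truncFn 0 u = min (max u 0) 1 := by
  rw [truncFn, neg_zero, add_zero, max_min_distrib_right, max_eq_left zero_le_one]

end Truncation

section Smoothing

variable {ε t : ℝ}

lemma isMollifier_half (hε : 0 < ε) : IsMollifier (mollifierScaled (ε / 2)) (ε / 2) :=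
  isMollifier_mollifierScaled (half_pos hε)

lemma abs_phiEps_le (hε : 0 < ε) (t : ℝ) : |phiEps ε t| ≤ 1 + ε :=
  (isMollifier_half hε).abs_integral_mul_comp_sub_le (abs_truncFn_le hε.le) t

lemma lipschitzWith_phiEps (hε : 0 < ε) : LipschitzWith 1 (phiEps ε) :=
  (isMollifier_half hε).lipschitzWith_integral_mul_comp_sub (lipschitzWith_truncFn ε)

lemma phiEps_of_affine (hε : 0 < ε) {a b : ℝ}
    (h : ∀ u, |u - t| ≤ ε / 2 → truncFn ε u = a * u + b) : phiEps ε t = a * t + b :=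
  (isMollifier_half hε).integral_mul_comp_sub_of_affine (mollifierScaled_neg _) h

lemma phiEps_of_le (hε : 0 < ε) (ht : t ≤ -(3 * ε / 2)) : phiEps ε t = -ε := by
  simpa using phiEps_of_affine (a := 0) (b := -ε) hε fun u hu => by
    rw [truncFn_of_le (by linarith [(abs_le.1 hu).2])]; ring

lemma phiEps_of_mem_Icc (hε : 0 < ε) (h₁ : -(ε / 2) ≤ t) (h₂ : t ≤ 1 + ε / 2) :
    phiEps ε t = t := by
  simpa using phiEps_of_affine (a := 1) (b := 0) hε fun u hu => by
    rw [truncFn_of_mem_Icc (by linarith [(abs_le.1 hu).1]) (by linarith [(abs_le.1 hu).2])]; ring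

lemma phiEps_of_ge (hε : 0 < ε) (ht : 1 + 3 * ε / 2 ≤ t) : phiEps ε t = 1 + ε := by
  simpa using phiEps_of_affine (a := 0) (b := 1 + ε) hε fun u hu => by
    rw [truncFn_of_ge hε.le (by linarith [(abs_le.1 hu).1])]; ring

lemma abs_deriv_phiEps_le (hε : 0 < ε) (t : ℝ) : |deriv (phiEps ε) t| ≤ 1 := by
  simpa using norm_deriv_le_of_lipschitz (x₀ := t) (lipschitzWith_phiEps hε)

lemma deriv_phiEps_of_lt (hε : 0 < ε) (ht : t < -(3 * ε / 2)) : deriv (phiEps ε) t = 0 := by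
  have h : phiEps ε =ᶠ[𝓝 t] fun _ => -ε :=
    eventually_of_mem (Iio_mem_nhds ht) fun x hx => phiEps_of_le hε (le_of_lt hx)
  rw [h.deriv_eq, deriv_const]

lemma deriv_phiEps_of_mem_Icc (hε : 0 < ε) (h₁ : 0 ≤ t) (h₂ : t ≤ 1) :
    deriv (phiEps ε) t = 1 := by
  have h : phiEps ε =ᶠ[𝓝 t] id :=
    eventually_of_mem (Ioo_mem_nhds (by linarith : -(ε / 2) < t) (by linarith : t < 1 + ε / 2))
      fun x hx => phiEps_of_mem_Icc hε hx.1.le hx.2.le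
  rw [h.deriv_eq, deriv_id]

lemma deriv_phiEps_of_gt (hε : 0 < ε) (ht : 1 + 3 * ε / 2 < t) : deriv (phiEps ε) t = 0 := by
  have h : phiEps ε =ᶠ[𝓝 t] fun _ => 1 + ε :=
    eventually_of_mem (Ioi_mem_nhds ht) fun x hx => phiEps_of_ge hε (le_of_lt hx)
  rw [h.deriv_eq, deriv_const]

end Smoothing

lemma phiEps_eventuallyEq_truncFn (t : ℝ) :
    (fun ε => phiEps ε t) =ᶠ[𝓝[>] 0] fun ε => truncFn ε t := by
  rcases lt_or_ge t 0 with h₀ | h₀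
  · filter_upwards [Ioo_mem_nhdsGT (show 0 < -t / 2 by linarith)] with ε hε
    rw [phiEps_of_le hε.1 (by linarith [hε.2]), truncFn_of_le (by linarith [hε.2])]
  rcases le_or_gt t 1 with h₁ | h₁
  · filter_upwards [self_mem_nhdsWithin] with ε (hε : 0 < ε)
    rw [phiEps_of_mem_Icc hε (by linarith) (by linarith),
      truncFn_of_mem_Icc (by linarith) (by linarith)]
  · filter_upwards [Ioo_mem_nhdsGT (show 0 < (t - 1) / 2 by linarith)] with ε hε
    rw [phiEps_of_ge hε.1 (by linarith [hε.2]), truncFn_of_ge hε.1.le (by linarith [hε.2])]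

lemma deriv_phiEps_eventuallyEq_indicator (t : ℝ) :
    (fun ε => deriv (phiEps ε) t) =ᶠ[𝓝[>] 0]
      fun _ => indicator (Icc (0:ℝ) 1) (fun _ => (1:ℝ)) t := by
  rcases lt_or_ge t 0 with h₀ | h₀
  · filter_upwards [Ioo_mem_nhdsGT (show 0 < -t / 2 by linarith)] with ε hε
    rw [deriv_phiEps_of_lt hε.1 (by linarith [hε.2]),
      indicator_of_notMem fun h => absurd h.1 (not_le.2 h₀)]
  rcases le_or_gt t 1 with h₁ | h₁
  · filter_upwards [self_mem_nhdsWithin] with ε hε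
    rw [deriv_phiEps_of_mem_Icc hε h₀ h₁, indicator_of_mem (mem_Icc.2 ⟨h₀, h₁⟩)]
  · filter_upwards [Ioo_mem_nhdsGT (show 0 < (t - 1) / 2 by linarith)] with ε hε
    rw [deriv_phiEps_of_gt hε.1 (by linarith [hε.2]),
      indicator_of_notMem fun h => absurd h.2 (not_le.2 h₁)]

lemma tendsto_truncFn (t : ℝ) :
    Tendsto (fun ε => truncFn ε t) (𝓝[>] 0) (𝓝 (min (max t 0) 1)) := by
  rw [← truncFn_zero]
  exact ((show Continuous fun ε => truncFn ε t by unfold truncFn; fun_prop).tendsto 0).mono_left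
    nhdsWithin_le_nhds

/-- Proposition `auxpropfir`: uniform bounds and pointwise limits of
`φ_ε` and `φ_ε'` as `ε → 0+`. -/
theorem phiEps_limits :
    (∀ ε : ℝ, 0 < ε → ∀ t : ℝ, |phiEps ε t| ≤ 1 + ε) ∧
    (∀ t : ℝ, Tendsto (fun ε => phiEps ε t) (𝓝[>] (0:ℝ)) (𝓝 (min (max t 0) 1))) ∧
    (∀ ε : ℝ, 0 < ε → ∀ t : ℝ, |deriv (phiEps ε) t| ≤ 1) ∧
    (∀ t : ℝ, Tendsto (fun ε => deriv (phiEps ε) t) (𝓝[>] (0:ℝ))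
      (𝓝 (indicator (Icc (0:ℝ) 1) (fun _ => (1:ℝ)) t))) :=
  ⟨fun _ hε t => abs_phiEps_le hε t,
    fun t => (tendsto_truncFn t).congr' (phiEps_eventuallyEq_truncFn t).symm,
    fun _ hε t => abs_deriv_phiEps_le hε t,
    fun t => tendsto_const_nhds.congr' (deriv_phiEps_eventuallyEq_indicator t).symm⟩
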